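/- Let A(m,l) = l + l^{-1} - m^{-4} + m^{-2} + 2 + m^2 - m^4 and let x ∈ ℂ* be such that all common zeros of A and B(m,l) = m l - x in (ℂ*)^2 are simple and finite in number. Then ∑_{(m,l): A=B=0} (m^2 - m^{-2}) / (m l · Jac(m,l)) = 0, where Jac = det(∂(A,B)/∂(m,l)). -/

import Mathlib

noncomputable def fig8A (m l : ℂ) : ℂ :=
  l + l⁻¹ + (-m⁻¹ ^ 4 + m⁻¹ ^ 2 + 2 + m ^ 2 - m ^ 4)

/-- Jacobian determinant of the system (A, B) with B(m,l) = m l - x at (m, l). -/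
noncomputable def jacAB (x m l : ℂ) : ℂ :=
  deriv (fun m' => fig8A m' l) m * deriv (fun l' => (m * l' - x)) l -
    deriv (fun l' => fig8A m l') l * deriv (fun m' => (m' * l - x)) m

open Polynomial Finset Lagrange

/-- Explicit formula for the Jacobian. -/
lemma jacAB_eq (x m l : ℂ) (hm : m ≠ 0) (hl : l ≠ 0) :
    jacAB x m l = (4 * m⁻¹ ^ 4 - 2 * m⁻¹ ^ 2 + 2 * m ^ 2 - 4 * m ^ 4) - l + l⁻¹ := by
  have hA_m : HasDerivAt (fun m' => fig8A m' l)
      (4 * m⁻¹ ^ 3 * (m ^ 2)⁻¹ - 2 * m⁻¹ * (m ^ 2)⁻¹ + (2 * m - 4 * m ^ 3)) m := by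
    unfold fig8A
    exact (((((hasDerivAt_inv hm).pow 4).neg.add ((hasDerivAt_inv hm).pow 2)).add_const 2).add
      (hasDerivAt_pow 2 m)).sub (hasDerivAt_pow 4 m) |>.const_add (l + l⁻¹) |> fun h => by
        exact h.congr_deriv (by norm_num; ring)
  have hA_l : HasDerivAt (fun l' => fig8A m l')
      (1 + -(l ^ 2)⁻¹) l := by
    unfold fig8A
    exact ((hasDerivAt_id l).add (hasDerivAt_inv hl)).add_const
      (-m⁻¹ ^ 4 + m⁻¹ ^ 2 + 2 + m ^ 2 - m ^ 4)
  have hB_l : HasDerivAt (fun l' => (m * l' - x)) m l := by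
    have := ((hasDerivAt_id l).const_mul m).sub_const x
    simpa using this
  have hB_m : HasDerivAt (fun m' => (m' * l - x)) l m := by
    have := ((hasDerivAt_id m).mul_const l).sub_const x
    simpa using this
  unfold jacAB
  rw [hA_m.deriv, hA_l.deriv, hB_l.deriv, hB_m.deriv]
  field_simp
  ring

/-- The one-variable resultant polynomial. -/
noncomputable def Rpoly (x : ℂ) : ℂ[X] :=
  C (-x) * X ^ 8 + C x * X ^ 6 + X ^ 5 + C (2 * x) * X ^ 4 + C (x ^ 2) * X ^ 3
    + C x * X ^ 2 + C (-x)

lemma Rpoly_eval (x m : ℂ) :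
    (Rpoly x).eval m
      = -x * m ^ 8 + x * m ^ 6 + m ^ 5 + 2 * x * m ^ 4 + x ^ 2 * m ^ 3 + x * m ^ 2 - x := by
  simp [Rpoly]; ring

lemma Rpoly_deriv_eval (x m : ℂ) :
    ((Rpoly x).derivative).eval m
      = -8 * x * m ^ 7 + 6 * x * m ^ 5 + 5 * m ^ 4 + 8 * x * m ^ 3 + 3 * x ^ 2 * m ^ 2
        + 2 * x * m := by
  simp [Rpoly, derivative_pow]; ring

lemma Rpoly_natDegree (x : ℂ) (hx : x ≠ 0) : (Rpoly x).natDegree = 8 := by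
  unfold Rpoly
  compute_degree!
  all_goals simp [hx]

lemma Rpoly_ne_zero (x : ℂ) (hx : x ≠ 0) : Rpoly x ≠ 0 := by
  intro h
  have := Rpoly_eval x 0
  rw [h] at this
  simp at this
  exact hx this

lemma Rpoly_leadingCoeff (x : ℂ) (hx : x ≠ 0) : (Rpoly x).leadingCoeff = -x := by
  rw [Polynomial.leadingCoeff, Rpoly_natDegree x hx]
  simp only [Rpoly, coeff_add, coeff_C_mul, coeff_X_pow, coeff_C, coeff_X_pow]
  norm_num

lemma coeff_basis' (s : Finset ℂ) (i : ℂ) (hi : i ∈ s) :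
    (Lagrange.basis s id i).coeff (#s - 1) = nodalWeight s id i := by
  classical
  rw [basis_eq_prod_sub_inv_mul_nodal_div hi, ← nodal_erase_eq_nodal_div hi, coeff_C_mul]
  have hmono : (nodal (s.erase i) (id : ℂ → ℂ)).Monic := nodal_monic
  have hd : (nodal (s.erase i) (id : ℂ → ℂ)).natDegree = #s - 1 := by
    rw [natDegree_nodal, card_erase_of_mem hi]
  rw [← hd, hmono.coeff_natDegree, mul_one]

/-- Key residue identity: a sum of `p(i)/∏_{j≠i}(i-j)` over nodes vanishes when
`deg p < #s - 1`. -/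
lemma sum_eval_mul_nodalWeight (s : Finset ℂ) (p : ℂ[X])
    (hd : p.degree < ((#s - 1 : ℕ) : WithBot ℕ)) :
    ∑ i ∈ s, p.eval i * nodalWeight s id i = 0 := by
  classical
  have hinj : Set.InjOn (id : ℂ → ℂ) s := Function.injective_id.injOn
  have hd' : p.degree < (#s : WithBot ℕ) :=
    lt_of_lt_of_le hd (Nat.cast_le.mpr (Nat.sub_le _ _))
  have hp : p = interpolate s id (fun i => p.eval i) := eq_interpolate hinj hd'
  have h0 : p.coeff (#s - 1) = 0 := coeff_eq_zero_of_degree_lt hd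
  rw [hp, interpolate_apply, finset_sum_coeff] at h0
  rw [← h0]
  refine Finset.sum_congr rfl fun i hi => ?_
  rw [coeff_C_mul, coeff_basis' s i hi]

theorem fig8_inverse_torsion_sum_vanishes
    (x : ℂ) (hx : x ≠ 0)
    (Z : Set (ℂ × ℂ))
    (hZ : Z = {p : ℂ × ℂ | p.1 ≠ 0 ∧ p.2 ≠ 0 ∧ fig8A p.1 p.2 = 0 ∧ p.1 * p.2 - x = 0})
    (hfin : Z.Finite)
    (hsimple : ∀ p ∈ Z, jacAB x p.1 p.2 ≠ 0) :
    ∑ p ∈ hfin.toFinset,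
        (p.1 ^ 2 - p.1⁻¹ ^ 2) / (p.1 * p.2 * jacAB x p.1 p.2) = 0 := by
  classical
  set R : ℂ[X] := Rpoly x with hRdef
  have hR0 : R ≠ 0 := Rpoly_ne_zero x hx
  have hZmem : ∀ p : ℂ × ℂ, p ∈ Z ↔
      p.1 ≠ 0 ∧ p.2 ≠ 0 ∧ fig8A p.1 p.2 = 0 ∧ p.1 * p.2 = x := by
    intro p
    rw [hZ]
    simp only [Set.mem_setOf_eq, sub_eq_zero]
  -- eval of R in terms of fig8A
  have hevalA : ∀ m l : ℂ, m ≠ 0 → l ≠ 0 → m * l = x →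
      R.eval m = x * m ^ 4 * fig8A m l := by
    intro m l hm hl hml
    rw [hRdef, Rpoly_eval, ← hml]
    unfold fig8A
    field_simp
    ring
  -- root of R at points of Z
  have hrootZ : ∀ p ∈ Z, R.eval p.1 = 0 := by
    intro p hp
    obtain ⟨hm, hl, hA, hml⟩ := (hZmem p).mp hp
    rw [hevalA p.1 p.2 hm hl hml, hA, mul_zero]
  -- derivative of R vs Jacobian at points of Z
  have hderiv : ∀ p ∈ Z, (R.derivative).eval p.1 = x * p.1 ^ 3 * jacAB x p.1 p.2 := by
    intro p hp
    obtain ⟨hm, hl, hA, hml⟩ := (hZmem p).mp hp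
    have hRe : R.eval p.1 = 0 := hrootZ p hp
    have key : (R.derivative).eval p.1
        = x * p.1 ^ 3 * jacAB x p.1 p.2 + 4 * p.1⁻¹ * R.eval p.1 := by
      rw [jacAB_eq x p.1 p.2 hm hl, hRdef, Rpoly_deriv_eval, Rpoly_eval, ← hml]
      field_simp
      ring
    rw [key, hRe, mul_zero, add_zero]
  have hderiv_ne : ∀ p ∈ Z, (R.derivative).eval p.1 ≠ 0 := by
    intro p hp
    obtain ⟨hm, _, _, _⟩ := (hZmem p).mp hp
    rw [hderiv p hp]
    exact mul_ne_zero (mul_ne_zero hx (pow_ne_zero _ hm)) (hsimple p hp)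
  -- summand transformation
  have hsummand : ∀ p ∈ Z,
      (p.1 ^ 2 - p.1⁻¹ ^ 2) / (p.1 * p.2 * jacAB x p.1 p.2)
        = (p.1 ^ 5 - p.1) / (R.derivative).eval p.1 := by
    intro p hp
    obtain ⟨hm, hl, hA, hml⟩ := (hZmem p).mp hp
    have hJ := hsimple p hp
    rw [hderiv p hp, ← hml]
    rw [← hml] at hJ
    rw [div_eq_div_iff (mul_ne_zero (mul_ne_zero hm hl) hJ)
      (mul_ne_zero (mul_ne_zero (mul_ne_zero hm hl) (pow_ne_zero 3 hm)) hJ)]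
    field_simp
  -- the finset of roots
  set s : Finset ℂ := R.roots.toFinset with hsdef
  -- roots are nonzero
  have hroot_ne : ∀ r ∈ R.roots, r ≠ 0 := by
    intro r hr h0
    have : R.eval r = 0 := (mem_roots hR0).mp hr
    rw [h0, hRdef, Rpoly_eval] at this
    simp at this
    exact hx this
  -- roots give points of Z
  have hrootZ' : ∀ r ∈ R.roots, (r, x * r⁻¹) ∈ Z := by
    intro r hr
    have hrne : r ≠ 0 := hroot_ne r hr
    have hlne : x * r⁻¹ ≠ 0 := mul_ne_zero hx (inv_ne_zero hrne)
    have hml : r * (x * r⁻¹) = x := by field_simp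
    have hre : R.eval r = 0 := (mem_roots hR0).mp hr
    refine (hZmem _).mpr ⟨hrne, hlne, ?_, hml⟩
    have := hevalA r (x * r⁻¹) hrne hlne hml
    rw [hre] at this
    have hx4 : x * r ^ 4 ≠ 0 := mul_ne_zero hx (pow_ne_zero _ hrne)
    field_simp at this
    simp only; rw [← div_eq_mul_inv]; exact (mul_eq_zero.mp this.symm).resolve_left hx4
  -- transfer the sum to the roots
  have hsum_eq : ∑ p ∈ hfin.toFinset,
      (p.1 ^ 2 - p.1⁻¹ ^ 2) / (p.1 * p.2 * jacAB x p.1 p.2)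
      = ∑ r ∈ s, (r ^ 5 - r) / (R.derivative).eval r := by
    refine Finset.sum_nbij' (fun p => p.1) (fun r => (r, x * r⁻¹)) ?_ ?_ ?_ ?_ ?_
    · intro p hp
      have hp' := hfin.mem_toFinset.mp hp
      rw [hsdef, Multiset.mem_toFinset, mem_roots hR0]
      exact hrootZ p hp'
    · intro r hr
      rw [hsdef, Multiset.mem_toFinset] at hr
      exact hfin.mem_toFinset.mpr (hrootZ' r hr)
    · intro p hp
      have hp' := hfin.mem_toFinset.mp hp
      obtain ⟨hm, hl, hA, hml⟩ := (hZmem p).mp hp'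
      have : x * p.1⁻¹ = p.2 := by field_simp; exact hml.symm
      exact Prod.ext rfl this
    · intro r hr; rfl
    · intro p hp
      exact hsummand p (hfin.mem_toFinset.mp hp)
  rw [hsum_eq]
  -- roots are simple, hence nodup
  have hnodup : R.roots.Nodup := by
    rw [Multiset.nodup_iff_count_le_one]
    intro r
    by_cases hr : r ∈ R.roots
    · have hderivr : (R.derivative).eval r ≠ 0 := by
        have := hderiv_ne (r, x * r⁻¹) (hrootZ' r hr)
        simpa using this
      by_contra hcount
      push_neg at hcount
      have h2 : 2 ≤ R.roots.count r := hcount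
      rw [count_roots] at h2
      have hroot : R.IsRoot r := (mem_roots hR0).mp hr
      have hd1 : (R.derivative).rootMultiplicity r = R.rootMultiplicity r - 1 :=
        derivative_rootMultiplicity_of_root hroot
      have hpos : 0 < (R.derivative).rootMultiplicity r := by omega
      have : (R.derivative).IsRoot r := by
        by_cases hd0 : R.derivative = 0
        · rw [hd0]; simp
        · exact (rootMultiplicity_pos hd0).mp hpos
      exact hderivr this
    · rw [Multiset.count_eq_zero_of_notMem hr]; omega
  have hsval : s.val = R.roots := Multiset.toFinset_val R.roots ▸ hnodup.dedup
  -- cardinality of the root set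
  have hcard : #s = 8 := by
    have hsp : Multiset.card R.roots = R.natDegree :=
      splits_iff_card_roots.mp (IsAlgClosed.splits R)
    have : #s = Multiset.card R.roots := by
      rw [Finset.card_def, hsval]
    rw [this, hsp, hRdef, Rpoly_natDegree x hx]
  -- factorization of R through its simple roots
  have hfact : R = C (-x) * nodal s id := by
    have := (C_leadingCoeff_mul_prod_multiset_X_sub_C (splits_iff_card_roots.mp (IsAlgClosed.splits R))).symm
    rw [Rpoly_leadingCoeff x hx] at this
    rw [this, nodal]
    congr 1
    rw [Finset.prod_eq_multiset_prod, hsval]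
    simp only [id_eq]
  -- evaluate derivative at a root via nodal weights
  have hderiv_nodal : ∀ r ∈ s, (R.derivative).eval r = -x * (nodalWeight s id r)⁻¹ := by
    intro r hr
    rw [hfact, derivative_C_mul, eval_mul, eval_C]
    congr 1
    rw [nodalWeight_eq_eval_derivative_nodal hr, inv_inv]
    rfl
  -- final computation
  have hw_ne : ∀ r ∈ s, nodalWeight s id r ≠ 0 := fun r hr =>
    nodalWeight_ne_zero Function.injective_id.injOn hr
  have hmain : ∑ r ∈ s, ((X : ℂ[X]) ^ 5 - X).eval r * nodalWeight s id r = 0 := by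
    refine sum_eval_mul_nodalWeight s _ ?_
    have hdeg : ((X : ℂ[X]) ^ 5 - X).degree = 5 := by
      compute_degree!
    rw [hdeg, hcard]
    norm_num
  calc ∑ r ∈ s, (r ^ 5 - r) / (R.derivative).eval r
      = ∑ r ∈ s, ((X : ℂ[X]) ^ 5 - X).eval r * nodalWeight s id r * (-x)⁻¹ := by
        refine Finset.sum_congr rfl fun r hr => ?_
        rw [hderiv_nodal r hr]
        have hwr := hw_ne r hr
        have hnx : (-x : ℂ) ≠ 0 := neg_ne_zero.mpr hx
        simp only [eval_sub, eval_pow, eval_X]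
        field_simp
    _ = (∑ r ∈ s, ((X : ℂ[X]) ^ 5 - X).eval r * nodalWeight s id r) * (-x)⁻¹ := by
        rw [Finset.sum_mul]
    _ = 0 := by rw [hmain, zero_mul]
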